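/- arXiv:1001.0937 — 4 statements merged into one kernel-verified Lean document; each statement's English description precedes it below -/
import Mathlib

section
/- Let σ ∈ S_{2n} be a permutation satisfying σ(i*) = σ(i)* for all i, where i* := 2n+1-i. Then σ is even if and only if the number of indices i ∈ {1,...,n} with σ(i) > n is even. -/
/-!
Let `c` be the reversal `i ↦ i*`, which interchanges the lower half `{i | i < n}` with its
complement. A permutation `τ` commuting with `c` and preserving the lower half is a
permutation `g` of the lower half times its conjugate `c g c⁻¹` on the upper half, so
`sign τ = sign g ^ 2 = 1`.
For a general `σ` commuting with `c`, composing with the transposition `(i i*)` for each `i` of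
the lower half that `σ` sends to the upper half costs one sign apiece and yields such a `τ`.
-/

/-- `rev n i = i*` where `i* = 2n+1-i` in 1-based indexing, here 0-based. -/
def rev (n : ℕ) (i : Fin (2 * n)) : Fin (2 * n) :=
  ⟨2 * n - 1 - i.val, by have := i.isLt; omega⟩

open Finset Function

namespace Equiv.Perm

variable {α : Type*} [DecidableEq α] {c : Perm α} {p : α → Prop} [DecidablePred p]

theorem commute_swap_apply_self_of_involutive (hc : Involutive c) (i : α) :
    Commute (swap i (c i)) c := by
  rw [Commute, SemiconjBy, mul_swap_eq_swap_mul, hc i, swap_comm]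

variable [Fintype α]

theorem sign_eq_one_of_commute_of_mapsTo (hcp : ∀ x, p (c x) ↔ ¬p x) {τ : Perm α}
    (hτc : Commute τ c) (hτp : ∀ x, p x → p (τ x)) : sign τ = 1 := by
  have hτc' (x : α) : τ (c x) = c (τ x) := DFunLike.congr_fun hτc.eq x
  have hτ (x : α) : p (τ x) ↔ p x := by
    refine ⟨fun hτx => by_contra fun hx => ?_, hτp x⟩
    have := hτp (c x) ((hcp x).2 hx)
    rw [hτc', hcp] at this
    exact this hτx
  let e : {x // p x} ≃ {x // ¬p x} := c.subtypeEquiv fun x => by rw [hcp, not_not]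
  have hsplit : τ = (τ.subtypePerm hτ).subtypeCongr
      (τ.subtypePerm (p := fun x => ¬p x) fun x => (hτ x).not) := by
    ext x
    by_cases hx : p x <;> simp [hx]
  have hconj : τ.subtypePerm (p := fun x => ¬p x) (fun x => (hτ x).not) =
      e.permCongr (τ.subtypePerm hτ) := by
    ext ⟨x, hx⟩
    simp [e, permCongr_apply, ← hτc']
  rw [hsplit, sign_subtypeCongr, hconj, sign_permCongr, Int.units_mul_self]

theorem filter_mul_swap_eq_erase (hcp : ∀ x, p (c x) ↔ ¬p x) {σ : Perm α}
    (hσc : Commute σ c) {i : α} (hi : i ∈ ({x | p x ∧ ¬p (σ x)} : Finset α)) :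
    ({x | p x ∧ ¬p ((σ * swap i (c i)) x)} : Finset α) =
      ({x | p x ∧ ¬p (σ x)} : Finset α).erase i := by
  simp only [mem_filter_univ] at hi
  ext x
  rw [mem_erase, mem_filter_univ, mem_filter_univ, mul_apply]
  by_cases hxi : x = i
  · subst hxi
    have hσcx : σ (c x) = c (σ x) := DFunLike.congr_fun hσc.eq x
    simp [hσcx, hcp, hi.2]
  by_cases hx : p x
  · have hxci : x ≠ c i := fun h => (hcp i).1 (h ▸ hx) hi.1
    simp [swap_apply_of_ne_of_ne hxi hxci, hxi, hx]
  · simp [hx]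

theorem sign_eq_neg_one_pow_card_of_commute (hc : Involutive c) (hcp : ∀ x, p (c x) ↔ ¬p x)
    {σ : Perm α} (hσc : Commute σ c) : sign σ = (-1) ^ #{x | p x ∧ ¬p (σ x)} := by
  induction hk : #{x | p x ∧ ¬p (σ x)} generalizing σ with
  | zero =>
    rw [card_eq_zero, filter_eq_empty_iff] at hk
    rw [pow_zero]
    exact sign_eq_one_of_commute_of_mapsTo hcp hσc fun x hx =>
      by_contra fun hσx => hk (mem_univ x) ⟨hx, hσx⟩
  | succ k ih =>
    obtain ⟨i, hi⟩ := card_pos.1 (by rw [hk]; exact k.succ_pos)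
    have hpi := ((mem_filter_univ i).1 hi).1
    have hne : i ≠ c i := fun h => (hcp i).1 (h ▸ hpi) hpi
    have hswap := ih (hσc.mul_left (commute_swap_apply_self_of_involutive hc i))
      (by rw [filter_mul_swap_eq_erase hcp hσc hi, card_erase_of_mem hi, hk, Nat.add_sub_cancel])
    calc sign σ = sign (σ * swap i (c i)) * sign (swap i (c i)) := by
          rw [← map_mul, mul_swap_mul_self]
      _ = (-1) ^ (k + 1) := by rw [hswap, sign_swap hne, pow_succ]

end Equiv.Perm

theorem rev_involutive (n : ℕ) : Involutive (rev n) := fun i => by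
  ext
  simp only [rev]
  omega

theorem stmt1_general (n : ℕ) (σ : Equiv.Perm (Fin (2 * n)))
    (hσ : ∀ i, σ (rev n i) = rev n (σ i)) :
    Equiv.Perm.sign σ = 1 ↔
      Even ((Finset.univ.filter
        (fun i : Fin (2 * n) => i.val < n ∧ n ≤ (σ i).val)).card) := by
  have hcp (i : Fin (2 * n)) : (rev n i).val < n ↔ ¬i.val < n := by
    simp only [rev]
    omega
  have hsign := Equiv.Perm.sign_eq_neg_one_pow_card_of_commute
    (c := (rev_involutive n).toPerm) (p := fun i => i.val < n) (rev_involutive n) hcp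
    (σ := σ) (Equiv.ext hσ)
  simp only [not_lt] at hsign
  rw [hsign, neg_one_pow_eq_one_iff_even (by decide)]

/-- a permutation σ ∈ S_{2n} with σ(i*) = σ(i)* for all i is even
iff the number of i ∈ {1,...,n} with σ(i) > n is even. -/
theorem stmt1 (n : ℕ) (hn : 2 ≤ n) (σ : Equiv.Perm (Fin (2 * n)))
    (hσ : ∀ i, σ (rev n i) = rev n (σ i)) :
    Equiv.Perm.sign σ = 1 ↔
      Even ((Finset.univ.filter
        (fun i : Fin (2 * n) => i.val < n ∧ n ≤ (σ i).val)).card) :=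
  stmt1_general n σ hσ
end

section
/- Let w ∈ W̃_{2n} have linear part σ ∈ S*_{2n}, and let μ_k be the vectors attached to its extended alcove, satisfying μ_k = μ_{k-1} + e_{σ(k)} - e_k and μ_k + μ*_{2n-k} = 0. Then for all 0 ≤ k ≤ n: −1 ≤ μ_k(i) + μ_k(i*) ≤ 0 for i ∈ A_k := {1,...,k} ∪ {k*,...,2n}, and 0 ≤ μ_k(i) + μ_k(i*) ≤ 1 for i ∈ B_k := {k+1,...,2n-k}. -/
/-- standard basis vector of ℤ^{2n}. -/
def eZ (n : ℕ) (j : Fin (2 * n)) : Fin (2 * n) → ℤ := fun i => if i = j then 1 else 0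

/-!
Telescoping the recursion from `μ_k` to `μ_l` shows that `μ_k(i) - μ_l(i)` is
`[i ∈ [k, l)] - [σ⁻¹(i) ∈ [k, l)]`. Duality turns `μ_k(i*)` into `-μ_{2n-k}(i)`, so
`μ_k(i) + μ_k(i*) = [i ∈ B_k] - [σ⁻¹(i) ∈ B_k]`, which lies in `[-1, 0]` for `i ∈ A_k` and in
`[0, 1]` for `i ∈ B_k`.
-/

theorem rev_eq_finRev (n : ℕ) : rev n = Fin.rev := by
  funext i
  ext
  simp only [rev, Fin.val_rev]
  omega

theorem rev_rev (n : ℕ) (i : Fin (2 * n)) : rev n (rev n i) = i := by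
  rw [rev_eq_finRev, Fin.rev_rev]

section Telescope

variable {N : ℕ} {σ : Equiv.Perm (Fin N)} {μ : ℕ → Fin N → ℤ}

theorem eq_apply_zero_add_of_step
    (hrec : ∀ (k : Fin N) j,
      μ (k + 1) j = μ k j + (if j = σ k then 1 else 0) - (if j = k then 1 else 0))
    {m : ℕ} (hm : m ≤ N) (j : Fin N) :
    μ m j = μ 0 j + (if (σ.symm j : ℕ) < m then 1 else 0) - (if (j : ℕ) < m then 1 else 0) := by
  induction m with
  | zero => simp
  | succ m ih =>
    have hmN : m < N := by omega
    have hσm : j = σ ⟨m, hmN⟩ ↔ (σ.symm j : ℕ) = m := by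
      rw [← Equiv.symm_apply_eq, Fin.ext_iff]
    have hjm : j = ⟨m, hmN⟩ ↔ (j : ℕ) = m := Fin.ext_iff
    rw [hrec ⟨m, hmN⟩ j, ih hmN.le, if_congr hσm rfl rfl, if_congr hjm rfl rfl]
    split_ifs <;> omega

theorem apply_sub_apply_of_step
    (hrec : ∀ (k : Fin N) j,
      μ (k + 1) j = μ k j + (if j = σ k then 1 else 0) - (if j = k then 1 else 0))
    {k l : ℕ} (hkl : k ≤ l) (hl : l ≤ N) (j : Fin N) :
    μ k j - μ l j =
      (if k ≤ (j : ℕ) ∧ (j : ℕ) < l then 1 else 0) -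
        (if k ≤ (σ.symm j : ℕ) ∧ (σ.symm j : ℕ) < l then 1 else 0) := by
  rw [eq_apply_zero_add_of_step hrec (hkl.trans hl), eq_apply_zero_add_of_step hrec hl]
  split_ifs <;> omega

end Telescope

theorem add_apply_rev_of_step {n : ℕ} {σ : Equiv.Perm (Fin (2 * n))} {μ : ℕ → Fin (2 * n) → ℤ}
    (hrec : ∀ (k : Fin (2 * n)) j,
      μ (k + 1) j = μ k j + (if j = σ k then 1 else 0) - (if j = k then 1 else 0))
    (hdual : ∀ k ≤ 2 * n, ∀ i, μ k i + μ (2 * n - k) (rev n i) = 0)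
    {k : ℕ} (hk : k ≤ n) (i : Fin (2 * n)) :
    μ k i + μ k (rev n i) =
      (if k ≤ (i : ℕ) ∧ (i : ℕ) < 2 * n - k then 1 else 0) -
        (if k ≤ (σ.symm i : ℕ) ∧ (σ.symm i : ℕ) < 2 * n - k then 1 else 0) := by
  have hdual_i := hdual k (by omega) (rev n i)
  rw [rev_rev] at hdual_i
  rw [← apply_sub_apply_of_step hrec (by omega) (by omega)]
  linarith

theorem stmt4_general (n : ℕ)
    (σ : Equiv.Perm (Fin (2 * n)))
    (μ : ℕ → Fin (2 * n) → ℤ)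
    (hrec : ∀ k : Fin (2 * n),
      μ (k.val + 1) = fun i => μ k.val i + eZ n (σ k) i - eZ n k i)
    (hdual : ∀ k ≤ 2 * n, ∀ i, μ k i + μ (2 * n - k) (rev n i) = 0) :
    ∀ k ≤ n, ∀ i : Fin (2 * n),
      ((i.val < k ∨ 2 * n - k ≤ i.val) →
        -1 ≤ μ k i + μ k (rev n i) ∧ μ k i + μ k (rev n i) ≤ 0) ∧
      ((k ≤ i.val ∧ i.val < 2 * n - k) →
        0 ≤ μ k i + μ k (rev n i) ∧ μ k i + μ k (rev n i) ≤ 1) := by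
  intro k hk i
  rw [add_apply_rev_of_step (fun k j => congrFun (hrec k) j) hdual hk i]
  constructor <;> intro hi <;> split_ifs <;> omega

/-- basic inequalities: let σ ∈ S*_{2n} and let μ_0,...,μ_{2n}
satisfy μ_0 = μ_{2n}, the recursion μ_k = μ_{k-1} + e_{σ(k)} - e_k and the
duality μ_k + μ*_{2n-k} = 0.  Then for 0 ≤ k ≤ n:
-1 ≤ μ_k(i) + μ_k(i*) ≤ 0 for i ∈ A_k = {1,...,k} ∪ {k*,...,2n}, and
0 ≤ μ_k(i) + μ_k(i*) ≤ 1 for i ∈ B_k = {k+1,...,2n-k}. -/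
theorem stmt4 (n : ℕ) (hn : 2 ≤ n)
    (σ : Equiv.Perm (Fin (2 * n))) (hσ : ∀ i, σ (rev n i) = rev n (σ i))
    (μ : ℕ → Fin (2 * n) → ℤ)
    (hper : μ 0 = μ (2 * n))
    (hrec : ∀ k : Fin (2 * n),
      μ (k.val + 1) = fun i => μ k.val i + eZ n (σ k) i - eZ n k i)
    (hdual : ∀ k ≤ 2 * n, ∀ i, μ k i + μ (2 * n - k) (rev n i) = 0) :
    ∀ k ≤ n, ∀ i : Fin (2 * n),
      ((i.val < k ∨ 2 * n - k ≤ i.val) →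
        -1 ≤ μ k i + μ k (rev n i) ∧ μ k i + μ k (rev n i) ≤ 0) ∧
      ((k ≤ i.val ∧ i.val < 2 * n - k) →
        0 ≤ μ k i + μ k (rev n i) ∧ μ k i + μ k (rev n i) ≤ 1) :=
  stmt4_general n σ μ hrec hdual
end

section
/- With notation as in the basic inequalities lemma, since σ is a permutation the recursion μ_k = μ_{k-1} + e_{σ(k)} - e_k implies that μ_k(i) ≤ μ_{2n-k}(i) ≤ μ_k(i) + 1 for i ∈ {1,...,k} ∪ {k*,...,2n}, and μ_k(i) ≥ μ_{2n-k}(i) ≥ μ_k(i) − 1 for i ∈ {k+1,...,2n-k}, for all 0 ≤ k ≤ n. -/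
/-!
Telescoping the recursion from `k` to `2n - k`, each index `m` in the window `[k, 2n - k)` adds
`e_{σ m} - e_m`. Since `σ` is a bijection, coordinate `i` gains exactly `1` if `σ⁻¹ i` lies in
the window and loses exactly `1` if `i` does, so `μ_{2n-k}(i) - μ_k(i) ∈ {0, 1}` for `i` outside
the window and `∈ {-1, 0}` for `i` inside it.
-/

theorem apply_eq_add_ite_sub_ite_of_rec {n : ℕ} {σ : Equiv.Perm (Fin (2 * n))}
    {μ : ℕ → Fin (2 * n) → ℤ}
    (hrec : ∀ k : Fin (2 * n), μ (k.val + 1) = fun i => μ k.val i + eZ n (σ k) i - eZ n k i)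
    {a b : ℕ} (hab : a ≤ b) (hb : b ≤ 2 * n) (i : Fin (2 * n)) :
    μ b i = μ a i + (if a ≤ (σ.symm i).val ∧ (σ.symm i).val < b then 1 else 0)
      - (if a ≤ i.val ∧ i.val < b then 1 else 0) := by
  induction b, hab using Nat.le_induction with
  | base => split_ifs <;> omega
  | succ b hab ih =>
    have step := congrFun (hrec ⟨b, by omega⟩) i
    dsimp only at step
    rw [step, ih (by omega)]
    simp only [eZ, ← Equiv.symm_apply_eq, Fin.ext_iff]
    split_ifs <;> omega

theorem stmt5_general (n : ℕ)
    (σ : Equiv.Perm (Fin (2 * n)))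
    (μ : ℕ → Fin (2 * n) → ℤ)
    (hrec : ∀ k : Fin (2 * n),
      μ (k.val + 1) = fun i => μ k.val i + eZ n (σ k) i - eZ n k i) :
    ∀ k ≤ n, ∀ i : Fin (2 * n),
      ((i.val < k ∨ 2 * n - k ≤ i.val) →
        μ k i ≤ μ (2 * n - k) i ∧ μ (2 * n - k) i ≤ μ k i + 1) ∧
      ((k ≤ i.val ∧ i.val < 2 * n - k) →
        μ (2 * n - k) i ≤ μ k i ∧ μ k i - 1 ≤ μ (2 * n - k) i) := by
  intro k hk i
  have hwindow := apply_eq_add_ite_sub_ite_of_rec hrec (a := k) (b := 2 * n - k)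
    (by omega) (by omega) i
  constructor <;> intro hi <;> split_ifs at hwindow <;> omega

/-- for a permutation σ ∈ S_{2n} and μ_0,...,μ_{2n} satisfying the
recursion μ_k = μ_{k-1} + e_{σ(k)} - e_k, one has for all 0 ≤ k ≤ n:
μ_k(i) ≤ μ_{2n-k}(i) ≤ μ_k(i) + 1 for i ∈ {1,...,k} ∪ {k*,...,2n}, and
μ_k(i) ≥ μ_{2n-k}(i) ≥ μ_k(i) - 1 for i ∈ {k+1,...,2n-k}. -/
theorem stmt5 (n : ℕ) (hn : 2 ≤ n)
    (σ : Equiv.Perm (Fin (2 * n)))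
    (μ : ℕ → Fin (2 * n) → ℤ)
    (hrec : ∀ k : Fin (2 * n),
      μ (k.val + 1) = fun i => μ k.val i + eZ n (σ k) i - eZ n k i) :
    ∀ k ≤ n, ∀ i : Fin (2 * n),
      ((i.val < k ∨ 2 * n - k ≤ i.val) →
        μ k i ≤ μ (2 * n - k) i ∧ μ (2 * n - k) i ≤ μ k i + 1) ∧
      ((k ≤ i.val ∧ i.val < 2 * n - k) →
        μ (2 * n - k) i ≤ μ k i ∧ μ k i - 1 ≤ μ (2 * n - k) i) :=
  stmt5_general n σ μ hrec
end

section
/- Let μ := (1,0^{(2n-2)},−1) ∈ ℤ^{2n} and let μ_k ∈ ℤ^{2n} (0 ≤ k ≤ 2n) satisfy the basic inequalities for each k and ν_k := (μ_k − μ*_k)/2. Then the following are equivalent: (a) ν_k ∈ Conv(S*_{2n}·μ) for all 0 ≤ k ≤ n and ν_0, ν_n ∈ S*_{2n}·μ; (b) μ_k ∈ S_{2n}·μ ∪ {0} for all 0 ≤ k ≤ 2n and μ_0, μ_n ∈ S*_{2n}·μ. Here S_{2n}·μ is the set of vectors e_i − e_j with i ≠ j, and S*_{2n}·μ is the set of vectors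 e_j − e_{j*}. -/
/-- standard basis vector of ℝ^{2n}. -/
def eR (n : ℕ) (j : Fin (2 * n)) : Fin (2 * n) → ℝ := fun i => if i = j then 1 else 0

/-- The orbit S_{2n}·μ of μ = e_1 - e_{2n}: all e_i - e_j with i ≠ j (over ℤ). -/
def SOrb (n : ℕ) : Set (Fin (2 * n) → ℤ) :=
  {v | ∃ i j : Fin (2 * n), i ≠ j ∧ v = fun m => eZ n i m - eZ n j m}

/-- The orbit S*_{2n}·μ: all e_j - e_{j*} (over ℤ). -/
def SstarOrbZ (n : ℕ) : Set (Fin (2 * n) → ℤ) :=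
  {v | ∃ j : Fin (2 * n), v = fun m => eZ n j m - eZ n (rev n j) m}

/-- The orbit S*_{2n}·μ: all e_j - e_{j*} (over ℝ). -/
def SstarOrbR (n : ℕ) : Set (Fin (2 * n) → ℝ) :=
  {v | ∃ j : Fin (2 * n), v = fun m => eR n j m - eR n (rev n j) m}

theorem rev_ne_self (n : ℕ) (i : Fin (2 * n)) : rev n i ≠ i := by
  intro h
  have := congrArg Fin.val h
  simp only [rev] at this
  omega

theorem rev_eq_iff (n : ℕ) {i j : Fin (2 * n)} : rev n i = j ↔ i = rev n j := by
  constructor <;> rintro rfl <;> rw [rev_rev]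

theorem sum_comp_rev {M : Type*} [AddCommMonoid M] (n : ℕ) (f : Fin (2 * n) → M) :
    ∑ i, f (rev n i) = ∑ i, f i :=
  Equiv.sum_comp (Function.Involutive.toPerm (rev n) (rev_rev n)) f

theorem eZ_rev (n : ℕ) (j i : Fin (2 * n)) : eZ n j (rev n i) = eZ n (rev n j) i := by
  simp only [eZ, rev_eq_iff]

theorem cast_eZ (n : ℕ) (j i : Fin (2 * n)) : ((eZ n j i : ℤ) : ℝ) = eR n j i := by
  simp only [eZ, eR]; push_cast; rfl

theorem eZ_eq_single (n : ℕ) (j : Fin (2 * n)) : eZ n j = Pi.single j 1 := by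
  ext i; simp only [eZ, Pi.single_apply]

theorem mem_SstarOrbR (n : ℕ) (j : Fin (2 * n)) :
    (fun m => eR n j m - eR n (rev n j) m) ∈ SstarOrbR n :=
  ⟨j, rfl⟩

theorem sum_abs_of_mem_SstarOrbR (n : ℕ) {v : Fin (2 * n) → ℝ} (hv : v ∈ SstarOrbR n) :
    ∑ i, |v i| = 2 := by
  obtain ⟨j, rfl⟩ := hv
  have hne := rev_ne_self n j
  have habs : ∀ i, |eR n j i - eR n (rev n j) i| = eR n j i + eR n (rev n j) i := by
    intro i
    by_cases hi : i = j
    · subst hi; simp [eR, hne.symm]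
    · by_cases hi' : i = rev n j
      · subst hi'; simp [eR, hne]
      · simp [eR, hi, hi']
  rw [Finset.sum_congr rfl fun i _ => habs i, Finset.sum_add_distrib]
  simp only [eR, Finset.sum_ite_eq', Finset.mem_univ, if_true]
  norm_num

theorem convexOn_sum_abs (ι : Type*) [Fintype ι] :
    ConvexOn ℝ Set.univ fun w : ι → ℝ => ∑ i, |w i| := by
  refine ⟨convex_univ, fun x _ y _ a b ha hb _ => ?_⟩
  simp only [Pi.add_apply, Pi.smul_apply, smul_eq_mul, Finset.mul_sum, ← Finset.sum_add_distrib]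
  gcongr with i
  calc |a * x i + b * y i| ≤ |a * x i| + |b * y i| := abs_add_le _ _
    _ = a * |x i| + b * |y i| := by rw [abs_mul, abs_mul, abs_of_nonneg ha, abs_of_nonneg hb]

theorem sum_abs_le_of_mem_convexHull {ι : Type*} [Fintype ι] {s : Set (ι → ℝ)} {r : ℝ}
    (hs : ∀ v ∈ s, ∑ i, |v i| ≤ r) {v : ι → ℝ} (hv : v ∈ convexHull ℝ s) :
    ∑ i, |v i| ≤ r := by
  have hconv := (convexOn_sum_abs ι).convex_le r
  exact (convexHull_min (fun w hw => Set.mem_sep (Set.mem_univ w) (hs w hw)) hconv hv).2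

theorem eq_zero_or_eq_single_sub_single {ι : Type*} [Fintype ι] [DecidableEq ι] {f : ι → ℤ}
    (hsum : ∑ i, f i = 0) (habs : ∑ i, |f i| ≤ 2) :
    f = 0 ∨ ∃ p q, p ≠ q ∧ f = Pi.single p 1 - Pi.single q 1 := by
  by_cases hnonpos : ∀ i, f i ≤ 0
  · left
    ext i
    exact (Finset.sum_eq_zero_iff_of_nonpos fun i _ => hnonpos i).1 hsum i (Finset.mem_univ i)
  right
  obtain ⟨p, hp⟩ : ∃ p, 0 < f p := by simpa using hnonpos
  obtain ⟨q, hq⟩ : ∃ q, f q < 0 := by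
    by_contra! hnonneg
    have := (Finset.sum_eq_zero_iff_of_nonneg fun i _ => hnonneg i).1 hsum p (Finset.mem_univ p)
    omega
  have hpq : p ≠ q := by rintro rfl; omega
  have hq_mem : q ∈ Finset.univ.erase p := Finset.mem_erase.2 ⟨hpq.symm, Finset.mem_univ q⟩
  have hsplit : |f p| + (|f q| + ∑ i ∈ (Finset.univ.erase p).erase q, |f i|) = ∑ i, |f i| := by
    rw [Finset.add_sum_erase _ (fun i => |f i|) hq_mem,
      Finset.add_sum_erase _ (fun i => |f i|) (Finset.mem_univ p)]
  have hrest := Finset.sum_nonneg fun i (_ : i ∈ (Finset.univ.erase p).erase q) => abs_nonneg (f i)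
  rw [abs_of_pos hp, abs_of_neg hq] at hsplit
  have hzero := (Finset.sum_eq_zero_iff_of_nonneg fun i _ => abs_nonneg (f i)).1
    (show ∑ i ∈ (Finset.univ.erase p).erase q, |f i| = 0 by omega)
  refine ⟨p, q, hpq, funext fun i => ?_⟩
  by_cases hip : i = p
  · subst hip; simp only [Pi.sub_apply, Pi.single_eq_same, Pi.single_eq_of_ne hpq]; omega
  by_cases hiq : i = q
  · subst hiq; simp only [Pi.sub_apply, Pi.single_eq_same, Pi.single_eq_of_ne hip]; omega
  simpa [hip, hiq] using hzero i (by simp [hip, hiq])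

theorem abs_sub_eq_abs_add_abs_of_abs_add_le_one {x y : ℤ} (h : |x + y| ≤ 1) : |x - y| = |x| + |y| := by
  rw [abs_le] at h
  rcases abs_cases x with ⟨hx, _⟩ | ⟨hx, _⟩ <;> rcases abs_cases y with ⟨hy, _⟩ | ⟨hy, _⟩ <;>
    rcases abs_cases (x - y) with ⟨hxy, _⟩ | ⟨hxy, _⟩ <;> omega

noncomputable def skewPart (n : ℕ) (f : Fin (2 * n) → ℤ) : Fin (2 * n) → ℝ :=
  fun i => ((f i : ℝ) - f (rev n i)) / 2

theorem sum_abs_skewPart (n : ℕ) {f : Fin (2 * n) → ℤ}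
    (hf : ∀ i, |f i + f (rev n i)| ≤ 1) : ∑ i, |skewPart n f i| = ((∑ i, |f i| : ℤ) : ℝ) := by
  have hterm : ∀ i, |skewPart n f i| = ((|f i| + |f (rev n i)| : ℤ) : ℝ) / 2 := fun i => by
    rw [skewPart, abs_div, abs_two, ← Int.cast_sub, ← Int.cast_abs, abs_sub_eq_abs_add_abs_of_abs_add_le_one (hf i)]
  rw [Finset.sum_congr rfl fun i _ => hterm i, ← Finset.sum_div, ← Int.cast_sum,
    Finset.sum_add_distrib, sum_comp_rev n fun i => |f i|]
  push_cast
  ring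

theorem sum_abs_le_two_of_skewPart_mem_convexHull (n : ℕ) {f : Fin (2 * n) → ℤ}
    (hf : ∀ i, |f i + f (rev n i)| ≤ 1) (h : skewPart n f ∈ convexHull ℝ (SstarOrbR n)) :
    ∑ i, |f i| ≤ 2 := by
  have := sum_abs_le_of_mem_convexHull (fun v hv => (sum_abs_of_mem_SstarOrbR n hv).le) h
  rwa [sum_abs_skewPart n hf, ← Int.cast_ofNat, Int.cast_le] at this

theorem eq_neg_comp_rev_of_sum_eq_zero (n : ℕ) {f : Fin (2 * n) → ℤ} (hsum : ∑ i, f i = 0)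
    (hf : (∀ i, 0 ≤ f i + f (rev n i)) ∨ ∀ i, f i + f (rev n i) ≤ 0) (i : Fin (2 * n)) :
    f (rev n i) = -f i := by
  have hpair : ∑ i, (f i + f (rev n i)) = 0 := by
    rw [Finset.sum_add_distrib, sum_comp_rev n f, hsum, add_zero]
  have := hf.elim
    (fun h => (Finset.sum_eq_zero_iff_of_nonneg fun i _ => h i).1 hpair i (Finset.mem_univ i))
    (fun h => (Finset.sum_eq_zero_iff_of_nonpos fun i _ => h i).1 hpair i (Finset.mem_univ i))
  omega

theorem skewPart_of_eq_neg_comp_rev (n : ℕ) {f : Fin (2 * n) → ℤ}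
    (hf : ∀ i, f (rev n i) = -f i) : skewPart n f = fun i => (f i : ℝ) := by
  ext i; simp only [skewPart, hf]; push_cast; ring

theorem skewPart_eZ_sub_eZ (n : ℕ) (p q : Fin (2 * n)) :
    skewPart n (fun m => eZ n p m - eZ n q m) =
      (1 / 2 : ℝ) • (fun m => eR n p m - eR n (rev n p) m) +
        (1 / 2 : ℝ) • (fun m => eR n (rev n q) m - eR n (rev n (rev n q)) m) := by
  ext i
  simp only [skewPart, eZ_rev, Int.cast_sub, cast_eZ, rev_rev, Pi.add_apply, Pi.smul_apply,
    smul_eq_mul]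
  ring

theorem skewPart_mem_SstarOrbR_iff (n : ℕ) {f : Fin (2 * n) → ℤ}
    (hf : ∀ i, f (rev n i) = -f i) : skewPart n f ∈ SstarOrbR n ↔ f ∈ SstarOrbZ n := by
  rw [skewPart_of_eq_neg_comp_rev n hf]
  refine exists_congr fun j => ⟨fun h => funext fun i => ?_, fun h => funext fun i => ?_⟩
  · have hi := congrFun h i
    rw [← cast_eZ, ← cast_eZ] at hi
    exact_mod_cast hi
  · rw [h, Int.cast_sub, cast_eZ, cast_eZ]

theorem skewPart_eZ_sub_eZ_mem_convexHull (n : ℕ) (p q : Fin (2 * n)) :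
    skewPart n (fun m => eZ n p m - eZ n q m) ∈ convexHull ℝ (SstarOrbR n) := by
  rw [skewPart_eZ_sub_eZ]
  exact convex_convexHull ℝ _ (subset_convexHull ℝ _ (mem_SstarOrbR n p))
    (subset_convexHull ℝ _ (mem_SstarOrbR n (rev n q))) (by norm_num) (by norm_num) (by norm_num)
theorem mem_SOrb_or_eq_zero (n : ℕ) {f : Fin (2 * n) → ℤ} (hsum : ∑ i, f i = 0)
    (habs : ∑ i, |f i| ≤ 2) : f ∈ SOrb n ∨ f = 0 := by
  rcases eq_zero_or_eq_single_sub_single hsum habs with h | ⟨p, q, hpq, h⟩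
  · exact Or.inr h
  · exact Or.inl ⟨p, q, hpq, by rw [h, eZ_eq_single, eZ_eq_single]; rfl⟩

theorem stmt9_general (n : ℕ)
    (μ : ℕ → Fin (2 * n) → ℤ)
    (hineqA : ∀ k ≤ n, ∀ i : Fin (2 * n), (i.val < k ∨ 2 * n - k ≤ i.val) →
      -1 ≤ μ k i + μ k (rev n i) ∧ μ k i + μ k (rev n i) ≤ 0)
    (hineqB : ∀ k ≤ n, ∀ i : Fin (2 * n), (k ≤ i.val ∧ i.val < 2 * n - k) →
      0 ≤ μ k i + μ k (rev n i) ∧ μ k i + μ k (rev n i) ≤ 1)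
    (hsum : ∀ k ≤ 2 * n, ∑ i, μ k i = 0)
    (hdual : ∀ k ≤ 2 * n, ∀ i, μ k i + μ (2 * n - k) (rev n i) = 0)
    (ν : ℕ → Fin (2 * n) → ℝ)
    (hν : ∀ k, ν k = fun i => ((μ k i : ℝ) - μ k (rev n i)) / 2) :
    ((∀ k ≤ n, ν k ∈ convexHull ℝ (SstarOrbR n)) ∧
      ν 0 ∈ SstarOrbR n ∧ ν n ∈ SstarOrbR n) ↔
    ((∀ k ≤ 2 * n, μ k ∈ SOrb n ∨ μ k = 0) ∧
      μ 0 ∈ SstarOrbZ n ∧ μ n ∈ SstarOrbZ n) := by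
  obtain rfl : ν = fun k => skewPart n (μ k) := funext hν
  have hpair : ∀ k ≤ n, ∀ i, |μ k i + μ k (rev n i)| ≤ 1 := fun k hk i => by
    rw [abs_le]
    by_cases hi : k ≤ i.val ∧ i.val < 2 * n - k
    · have := hineqB k hk i hi; omega
    · have := hineqA k hk i (by omega); omega
  have hanti0 := eq_neg_comp_rev_of_sum_eq_zero n (hsum 0 (Nat.zero_le _))
    (Or.inl fun i => (hineqB 0 (Nat.zero_le n) i ⟨Nat.zero_le _, by simp⟩).1)
  have hantin := eq_neg_comp_rev_of_sum_eq_zero n (hsum n (by omega))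
    (Or.inr fun i => (hineqA n le_rfl i (by omega)).2)
  simp only [skewPart_mem_SstarOrbR_iff n hanti0, skewPart_mem_SstarOrbR_iff n hantin]
  refine and_congr_left fun ⟨⟨j, _⟩, _⟩ => ⟨fun hhull k hk => ?_, fun hb k hk => ?_⟩
  · refine mem_SOrb_or_eq_zero n (hsum k hk) ?_
    have habs k (hk : k ≤ n) : ∑ i, |μ k i| ≤ 2 :=
      sum_abs_le_two_of_skewPart_mem_convexHull n (hpair k hk) (hhull k hk)
    rcases le_or_gt k n with hkn | hnk
    · exact habs k hkn
    · have hμk : ∀ i, μ k i = -μ (2 * n - k) (rev n i) := fun i => by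
        have := hdual (2 * n - k) (by omega) (rev n i)
        rw [rev_rev, Nat.sub_sub_self hk] at this
        omega
      simp only [hμk, abs_neg, sum_comp_rev n fun i => |μ (2 * n - k) i|]
      exact habs _ (by omega)
  · rcases hb k (by omega) with ⟨p, q, -, hpq⟩ | hzero
    · rw [hpq]; exact skewPart_eZ_sub_eZ_mem_convexHull n p q
    · rw [show μ k = fun m => eZ n j m - eZ n j m by ext; simp [hzero]]
      exact skewPart_eZ_sub_eZ_mem_convexHull n j j

/-- with μ = (1,0^{(2n-2)},-1) and μ_k satisfying the basic
inequalities, Σμ_k = 0, the duality and periodicity, and ν_k := (μ_k - μ*_k)/2,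
the following are equivalent:
(a) ν_k ∈ Conv(S*_{2n}μ) for 0 ≤ k ≤ n and ν_0, ν_n ∈ S*_{2n}μ;
(b) μ_k ∈ S_{2n}μ ∪ {0} for 0 ≤ k ≤ 2n and μ_0, μ_n ∈ S*_{2n}μ. -/
theorem stmt9 (n : ℕ) (hn : 2 ≤ n)
    (μ : ℕ → Fin (2 * n) → ℤ)
    (hineqA : ∀ k ≤ n, ∀ i : Fin (2 * n), (i.val < k ∨ 2 * n - k ≤ i.val) →
      -1 ≤ μ k i + μ k (rev n i) ∧ μ k i + μ k (rev n i) ≤ 0)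
    (hineqB : ∀ k ≤ n, ∀ i : Fin (2 * n), (k ≤ i.val ∧ i.val < 2 * n - k) →
      0 ≤ μ k i + μ k (rev n i) ∧ μ k i + μ k (rev n i) ≤ 1)
    (hsum : ∀ k ≤ 2 * n, ∑ i, μ k i = 0)
    (hdual : ∀ k ≤ 2 * n, ∀ i, μ k i + μ (2 * n - k) (rev n i) = 0)
    (hper : μ (2 * n) = μ 0)
    (ν : ℕ → Fin (2 * n) → ℝ)
    (hν : ∀ k, ν k = fun i => ((μ k i : ℝ) - μ k (rev n i)) / 2) :
    ((∀ k ≤ n, ν k ∈ convexHull ℝ (SstarOrbR n)) ∧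
      ν 0 ∈ SstarOrbR n ∧ ν n ∈ SstarOrbR n) ↔
    ((∀ k ≤ 2 * n, μ k ∈ SOrb n ∨ μ k = 0) ∧
      μ 0 ∈ SstarOrbZ n ∧ μ n ∈ SstarOrbZ n) :=
  stmt9_general n μ hineqA hineqB hsum hdual ν hν
end
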